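/- A non-empty operation sequence w with decomposition w = x₁w₁⋯w_{2m-1}x_{2m}v (x₁⋯x_{2m} unbreakable, wᵢ tsip words, v an operation sequence) is canonical if and only if: (i) x₁x₂⋯x_{2m} is top happy; (ii) each wᵢ is a standard tsip word that outputs eagerly; (iii) v is canonical; (iv) whenever xᵢxᵢ₊₁ equals I₁O₂ or I₂O₁, the word wᵢ is non-empty. -/

import Mathlib

/-!
Write `w = c₁ ⋯ c_{2m} v` with cells `cᵢ = xᵢwᵢ` (and `w_{2m}` empty). A tsip word has zero net
effect at each end of the deque, so the deque size before `xᵢ` is that after `x₁ ⋯ x_{i-1}`,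
and inside a standard `wᵢ` it is raised by at least one before every `I₂` or `O₂`; since the
deque is non-empty strictly inside the unbreakable word `x₁ ⋯ x_{2m}`, top happiness of `w`
reduces to that of `x₁ ⋯ x_{2m}` and of `v`. Tsip words begin with an input and end with an
output, so a sub-word `I₁O₂` or `I₂O₁` of `w` lies in some `wᵢ`, in `v`, or is `xᵢxᵢ₊₁` with
`wᵢ` empty. Finally, a non-empty tsip sub-word of `w` not inside some `wᵢ` or `v` sheds a
balanced piece of a `wᵢ` and then projects onto a tsip sub-word of `x₁ ⋯ x_{2m}`, or onto a
suffix of it of non-negative net size; unbreakability forces it to start at `x₁`, which top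
happiness makes `I₁`.
-/

/-- The four deque operations: input to the top/bottom, output from the top/bottom. -/
inductive Letter : Type
  | I1 | I2 | O1 | O2
  deriving DecidableEq, Repr

open Letter

/-- Whether a letter is an input operation. -/
def Letter.isI : Letter → Bool
  | I1 => true | I2 => true | O1 => false | O2 => false

/-- Number of input letters in a word. -/
def countI (w : List Letter) : ℕ := (w.filter Letter.isI).length

/-- Number of output letters in a word. -/
def countO (w : List Letter) : ℕ := (w.filter fun x => !x.isI).length

/-- An operation sequence: equally many inputs and outputs, and every prefix has at
least as many inputs as outputs. -/
def IsOpSeq (w : List Letter) : Prop :=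
  countI w = countO w ∧ ∀ m : ℕ, countO (w.take m) ≤ countI (w.take m)

/-- A tsip word: for each end `j ∈ {1,2}` of the deque, the number of `Iⱼ` equals the
number of `Oⱼ`, and every prefix contains at least as many `Iⱼ` as `Oⱼ`. -/
def IsTsip (w : List Letter) : Prop :=
  (w.count I1 = w.count O1) ∧ (w.count I2 = w.count O2) ∧
    ∀ m : ℕ, (w.take m).count O1 ≤ (w.take m).count I1 ∧
      (w.take m).count O2 ≤ (w.take m).count I2

/-- A word outputs eagerly if it contains no consecutive sub-word `I₁O₂` or `I₂O₁`. -/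
def OutputsEagerly (w : List Letter) : Prop :=
  ¬ [I1, O2] <:+: w ∧ ¬ [I2, O1] <:+: w

/-- A word is standard if every non-empty tsip sub-word begins with `I₁`. -/
def Standard (w : List Letter) : Prop :=
  ∀ u : List Letter, u <:+: w → IsTsip u → u ≠ [] → u.head? = some I1

/-- A word is top happy if `I₂` and `O₂` occur only when the number of preceding inputs
exceeds the number of preceding outputs by at least two (i.e. the deque holds at least
two items). -/
def TopHappy (w : List Letter) : Prop :=
  ∀ u v : List Letter, ∀ x : Letter, w = u ++ x :: v → (x = I2 ∨ x = O2) →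
    countO u + 2 ≤ countI u

/-- A canonical operation sequence: outputs eagerly, standard and top happy. -/
def Canonical (w : List Letter) : Prop :=
  OutputsEagerly w ∧ Standard w ∧ TopHappy w

/-- The state of a deque machine: the remaining input, the deque contents (top first),
and the output produced so far. -/
structure DequeState : Type where
  inp : List ℕ
  dq : List ℕ
  out : List ℕ
  deriving DecidableEq, Repr

/-- Apply a single operation to a deque state, if possible. -/
def applyOp : Letter → DequeState → Option DequeState
  | I1, ⟨a :: r, d, o⟩ => some ⟨r, a :: d, o⟩
  | I2, ⟨a :: r, d, o⟩ => some ⟨r, d ++ [a], o⟩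
  | O1, ⟨r, a :: d, o⟩ => some ⟨r, d, o ++ [a]⟩
  | O2, ⟨r, d, o⟩ =>
      match d.getLast? with
      | some a => some ⟨r, d.dropLast, o ++ [a]⟩
      | none => none
  | I1, ⟨[], _, _⟩ => none
  | I2, ⟨[], _, _⟩ => none
  | O1, ⟨_, [], _⟩ => none

/-- Run a word of operations on a deque state. -/
def runOps : List Letter → DequeState → Option DequeState
  | [], s => some s
  | x :: w, s => (applyOp x s).bind (runOps w)

/-- `w` produces the permutation (given as the list `l`): applying `w` to the identity
input `0, 1, …, l.length - 1` empties the input and the deque with output exactly `l`. -/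
def Produces (w : List Letter) (l : List ℕ) : Prop :=
  runOps w ⟨List.range l.length, [], []⟩ = some ⟨[], [], l⟩

/-- A list is deque-achievable if it is a permutation of `0, …, n-1` produced by some
operation sequence. -/
def DequeAchievable (l : List ℕ) : Prop := ∃ w : List Letter, Produces w l

/-- An unbreakable operation sequence: non-empty, contains no tsip sub-word other than
possibly itself or the empty word, and no proper non-empty prefix is an operation
sequence (the deque is never empty strictly inside the sequence). -/
def IsUnbreakable (s : List Letter) : Prop :=
  IsOpSeq s ∧ s ≠ [] ∧
    (∀ u : List Letter, u <:+: s → IsTsip u → u = [] ∨ u = s) ∧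
    ∀ p : List Letter, p <+: s → IsOpSeq p → p = [] ∨ p = s

/-- `IsDecomp w xs ws v` asserts that `w = x₁w₁x₂w₂⋯x_{2m-1}w_{2m-1}x_{2m}v`, where
`xs = [x₁,…,x_{2m}]` with `m ≥ 1` forms an unbreakable operation sequence, each `wᵢ` in
`ws = [w₁,…,w_{2m-1}]` is a (possibly empty) tsip word, and `v` is an operation
sequence. -/
def IsDecomp (w : List Letter) (xs : List Letter) (ws : List (List Letter))
    (v : List Letter) : Prop :=
  (∃ m : ℕ, 0 < m ∧ xs.length = 2 * m) ∧
    xs.length = ws.length + 1 ∧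
    IsUnbreakable xs ∧
    (∀ wi ∈ ws, IsTsip wi) ∧
    IsOpSeq v ∧
    w = (List.zipWith (fun x wi => x :: wi) xs (ws ++ [[]])).flatten ++ v

instance : Inhabited Letter := ⟨I1⟩

namespace Letter

def delta1 : Letter → ℤ
  | I1 => 1 | O1 => -1 | _ => 0

def delta2 : Letter → ℤ
  | I2 => 1 | O2 => -1 | _ => 0

def delta (x : Letter) : ℤ := if x.isI then 1 else -1

lemma delta_eq_add (x : Letter) : x.delta = x.delta1 + x.delta2 := by
  cases x <;> rfl

end Letter

def net1 (l : List Letter) : ℤ := (l.map Letter.delta1).sum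

def net2 (l : List Letter) : ℤ := (l.map Letter.delta2).sum

def net (l : List Letter) : ℤ := (l.map Letter.delta).sum

@[simp] lemma net1_nil : net1 [] = 0 := rfl
@[simp] lemma net2_nil : net2 [] = 0 := rfl
@[simp] lemma net_nil : net [] = 0 := rfl

@[simp] lemma net1_cons (x : Letter) (l : List Letter) : net1 (x :: l) = x.delta1 + net1 l := by
  simp [net1]

@[simp] lemma net2_cons (x : Letter) (l : List Letter) : net2 (x :: l) = x.delta2 + net2 l := by
  simp [net2]

@[simp] lemma net_cons (x : Letter) (l : List Letter) : net (x :: l) = x.delta + net l := by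
  simp [net]

@[simp] lemma net1_append (l₁ l₂ : List Letter) : net1 (l₁ ++ l₂) = net1 l₁ + net1 l₂ := by
  simp [net1]

@[simp] lemma net2_append (l₁ l₂ : List Letter) : net2 (l₁ ++ l₂) = net2 l₁ + net2 l₂ := by
  simp [net2]

@[simp] lemma net_append (l₁ l₂ : List Letter) : net (l₁ ++ l₂) = net l₁ + net l₂ := by
  simp [net]

lemma net_eq_net1_add_net2 (l : List Letter) : net l = net1 l + net2 l := by
  induction l with
  | nil => rfl
  | cons x l ih => simp [ih, Letter.delta_eq_add]; ring

lemma net1_eq_count (l : List Letter) : net1 l = l.count I1 - l.count O1 := by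
  induction l with
  | nil => rfl
  | cons x l ih => cases x <;> simp [ih, Letter.delta1] <;> ring

lemma net2_eq_count (l : List Letter) : net2 l = l.count I2 - l.count O2 := by
  induction l with
  | nil => rfl
  | cons x l ih => cases x <;> simp [ih, Letter.delta2] <;> ring

lemma net_eq_count (l : List Letter) : net l = countI l - countO l := by
  induction l with
  | nil => rfl
  | cons x l ih =>
    cases x <;> simp [ih, countI, countO, List.filter_cons, Letter.isI, Letter.delta] <;> ring

def NonnegPrefixes (l : List Letter) : Prop :=
  ∀ p, p <+: l → 0 ≤ net1 p ∧ 0 ≤ net2 p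

lemma NonnegPrefixes.of_prefix {l p : List Letter} (h : NonnegPrefixes l) (hp : p <+: l) :
    NonnegPrefixes p :=
  fun q hq => h q (hq.trans hp)

lemma isTsip_iff {l : List Letter} : IsTsip l ↔ net1 l = 0 ∧ net2 l = 0 ∧ NonnegPrefixes l := by
  simp only [IsTsip, NonnegPrefixes, net1_eq_count, net2_eq_count, sub_eq_zero, sub_nonneg,
    Nat.cast_inj, Nat.cast_le]
  constructor
  · rintro ⟨h1, h2, h⟩
    exact ⟨h1, h2, fun p hp => by rw [List.prefix_iff_eq_take.1 hp]; exact h _⟩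
  · rintro ⟨h1, h2, h⟩
    exact ⟨h1, h2, fun m => h _ (List.take_prefix m l)⟩

lemma isOpSeq_iff {l : List Letter} : IsOpSeq l ↔ net l = 0 ∧ ∀ p, p <+: l → 0 ≤ net p := by
  simp only [IsOpSeq, net_eq_count, sub_eq_zero, sub_nonneg, Nat.cast_inj, Nat.cast_le]
  constructor
  · rintro ⟨h1, h⟩
    exact ⟨h1, fun p hp => by rw [List.prefix_iff_eq_take.1 hp]; exact h _⟩
  · rintro ⟨h1, h⟩
    exact ⟨h1, fun m => h _ (List.take_prefix m l)⟩

lemma topHappy_iff {l : List Letter} :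
    TopHappy l ↔ ∀ u v x, l = u ++ x :: v → (x = I2 ∨ x = O2) → 2 ≤ net u := by
  simp only [TopHappy, net_eq_count]
  refine forall_congr' fun u => forall_congr' fun v => forall_congr' fun x => ?_
  refine imp_congr_right fun _ => imp_congr_right fun _ => ?_
  omega

namespace IsTsip

variable {l p : List Letter}

lemma net1_eq_zero (h : IsTsip l) : net1 l = 0 := (isTsip_iff.1 h).1

lemma net2_eq_zero (h : IsTsip l) : net2 l = 0 := (isTsip_iff.1 h).2.1

lemma nonnegPrefixes (h : IsTsip l) : NonnegPrefixes l := (isTsip_iff.1 h).2.2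

lemma nonpos_of_suffix (h : IsTsip l) (hp : p <:+ l) : net1 p ≤ 0 ∧ net2 p ≤ 0 := by
  obtain ⟨q, rfl⟩ := hp
  have h1 := h.net1_eq_zero
  have h2 := h.net2_eq_zero
  have := h.nonnegPrefixes q (List.prefix_append q p)
  simp only [net1_append, net2_append] at h1 h2
  omega

lemma of_append_left {s : List Letter} (h : IsTsip (p ++ s)) (h1 : net1 p = 0)
    (h2 : net2 p = 0) : IsTsip s := by
  obtain ⟨e1, e2, hpre⟩ := isTsip_iff.1 h
  simp only [net1_append, net2_append, h1, h2, zero_add] at e1 e2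
  refine isTsip_iff.2 ⟨e1, e2, fun q hq => ?_⟩
  simpa [h1, h2] using hpre (p ++ q) ((List.prefix_append_right_inj p).2 hq)

lemma head_isI {x : Letter} (h : IsTsip (x :: l)) : x.isI = true := by
  have := h.nonnegPrefixes [x] (List.prefix_cons_inj x |>.2 (List.nil_prefix))
  cases x <;> simp_all [Letter.delta1, Letter.delta2, Letter.isI]

lemma getLast_isI {x : Letter} (h : IsTsip (l ++ [x])) : x.isI = false := by
  have := h.nonpos_of_suffix (List.suffix_append l [x])
  cases x <;> simp_all [Letter.delta1, Letter.delta2, Letter.isI]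

end IsTsip

lemma isTsip_nil : IsTsip [] := isTsip_iff.2 ⟨rfl, rfl, fun p hp => by simp_all⟩

namespace IsOpSeq

variable {l p : List Letter}

lemma net_eq_zero (h : IsOpSeq l) : net l = 0 := (isOpSeq_iff.1 h).1

lemma net_nonneg_of_prefix (h : IsOpSeq l) (hp : p <+: l) : 0 ≤ net p := (isOpSeq_iff.1 h).2 p hp

lemma head_isI {x : Letter} (h : IsOpSeq (x :: l)) : x.isI = true := by
  have := h.net_nonneg_of_prefix (List.prefix_cons_inj x |>.2 (List.nil_prefix))
  cases x <;> simp_all [Letter.delta, Letter.isI]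

lemma getLast_isI {x : Letter} (h : IsOpSeq (l ++ [x])) : x.isI = false := by
  have h0 := h.net_eq_zero
  have := h.net_nonneg_of_prefix (List.prefix_append l [x])
  cases x <;> simp_all [Letter.delta, Letter.isI] <;> omega

end IsOpSeq

namespace IsUnbreakable

variable {l p q : List Letter}

lemma net_pos (h : IsUnbreakable (p ++ q)) (hp : p ≠ []) (hq : q ≠ []) : 0 < net p := by
  have hnonneg : ∀ r, r <+: p → 0 ≤ net r := fun r hr =>
    h.1.net_nonneg_of_prefix (hr.trans (List.prefix_append p q))
  refine (hnonneg p (List.prefix_refl p)).lt_of_ne fun h0 => ?_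
  rcases h.2.2.2 p (List.prefix_append p q) (isOpSeq_iff.2 ⟨h0.symm, hnonneg⟩) with h' | h'
  · exact hp h'
  · exact hq (by simpa using h')

lemma eq_nil_of_isTsip {a s b : List Letter} (h : IsUnbreakable (a ++ s ++ b)) (hs : IsTsip s)
    (hne : s ≠ []) : a = [] ∧ b = [] := by
  rcases h.2.2.1 s ⟨a, b, rfl⟩ hs with h' | h'
  · exact absurd h' hne
  · have := congrArg List.length h'
    simp only [List.length_append] at this
    exact ⟨List.eq_nil_of_length_eq_zero (by omega), List.eq_nil_of_length_eq_zero (by omega)⟩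

end IsUnbreakable

lemma head_eq_I1_of_topHappy {x : Letter} {l : List Letter} (hop : IsOpSeq (x :: l))
    (htop : TopHappy (x :: l)) : x = I1 := by
  have hx := hop.head_isI
  have := topHappy_iff.1 htop [] l x rfl
  cases x <;> simp_all [Letter.isI]

lemma Standard.infix {l s : List Letter} (h : Standard l) (hs : s <:+: l) : Standard s :=
  fun u hu => h u (hu.trans hs)

lemma standard_nil : Standard [] := fun _ hu _ hne => absurd (List.eq_nil_of_infix_nil hu) hne

lemma TopHappy.of_append_left {p v : List Letter} (h : TopHappy (p ++ v)) (hp : net p = 0) :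
    TopHappy v := by
  refine topHappy_iff.2 fun u s x hv hx => ?_
  have := topHappy_iff.1 h (p ++ u) s x (by simp [hv]) hx
  simpa [hp] using this

def BadPair (a b : Letter) : Prop := a = I1 ∧ b = O2 ∨ a = I2 ∧ b = O1

lemma BadPair.isI {a b : Letter} (h : BadPair a b) : a.isI = true ∧ b.isI = false := by
  rcases h with ⟨rfl, rfl⟩ | ⟨rfl, rfl⟩ <;> exact ⟨rfl, rfl⟩

lemma outputsEagerly_iff_isChain {l : List Letter} :
    OutputsEagerly l ↔ l.IsChain fun a b => ¬ BadPair a b := by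
  have hchain : l.IsChain (fun a b => ¬ BadPair a b) ↔ ∀ a b, [a, b] <:+: l → ¬ BadPair a b :=
    ⟨fun h a b hab => List.isChain_pair.1 (h.infix hab),
      fun h => (List.isChain_isInfix l).imp fun a b => h a b⟩
  rw [hchain, OutputsEagerly]
  constructor
  · rintro ⟨h1, h2⟩ a b hab (⟨rfl, rfl⟩ | ⟨rfl, rfl⟩)
    exacts [h1 hab, h2 hab]
  · intro h
    exact ⟨fun hab => h _ _ hab (Or.inl ⟨rfl, rfl⟩), fun hab => h _ _ hab (Or.inr ⟨rfl, rfl⟩)⟩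

lemma outputsEagerly_nil : OutputsEagerly [] := outputsEagerly_iff_isChain.2 .nil

namespace List

variable {α : Type*}

lemma prefix_append_cases {u a b : List α} (h : u <+: a ++ b) :
    u <+: a ∨ ∃ r, u = a ++ r ∧ r <+: b := by
  obtain ⟨t, ht⟩ := h
  rcases append_eq_append_iff.1 ht with ⟨c, rfl, -⟩ | ⟨r, rfl, hb⟩
  · exact Or.inl (prefix_append u c)
  · exact Or.inr ⟨r, rfl, t, hb.symm⟩

lemma suffix_append_cases {t a b : List α} (h : t <:+ a ++ b) :
    t <:+ b ∨ ∃ s, t = s ++ b ∧ s <:+ a := by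
  obtain ⟨p, hp⟩ := h
  rcases append_eq_append_iff.1 hp with ⟨s, rfl, rfl⟩ | ⟨c, -, rfl⟩
  · exact Or.inr ⟨s, rfl, suffix_append p s⟩
  · exact Or.inl (suffix_append c t)

lemma exists_of_prefix_flatten {L : List (List α)} {q : List α} (hq : q <+: L.flatten)
    (hne : q ≠ []) :
    ∃ L₁ d L₂ q', L = L₁ ++ d :: L₂ ∧ q = L₁.flatten ++ q' ∧ q' <+: d ∧ q' ≠ [] := by
  induction L generalizing q with
  | nil => exact absurd (prefix_nil.1 hq) hne
  | cons c L ih =>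
    rcases prefix_append_cases (flatten_cons ▸ hq) with hc | ⟨r, rfl, hr⟩
    · exact ⟨[], c, L, q, rfl, rfl, hc, hne⟩
    · rcases eq_or_ne r [] with rfl | hr'
      · exact ⟨[], c, L, c, rfl, by simp, prefix_refl c, by simpa using hne⟩
      · obtain ⟨L₁, d, L₂, q', rfl, rfl, hq', hq'ne⟩ := ih hr hr'
        exact ⟨c :: L₁, d, L₂, q', rfl, by simp, hq', hq'ne⟩

lemma exists_of_suffix_flatten {L : List (List α)} {t : List α} (ht : t <:+ L.flatten) :
    t = [] ∨ ∃ L₁ c L₂ s, L = L₁ ++ c :: L₂ ∧ s <:+ c ∧ s ≠ [] ∧ t = s ++ L₂.flatten := by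
  induction L generalizing t with
  | nil => exact Or.inl (suffix_nil.1 ht)
  | cons c L ih =>
    have of_suffix_tail (hL : t <:+ L.flatten) : t = [] ∨ ∃ L₁ d L₂ s,
        c :: L = L₁ ++ d :: L₂ ∧ s <:+ d ∧ s ≠ [] ∧ t = s ++ L₂.flatten := by
      rcases ih hL with h | ⟨L₁, d, L₂, s, rfl, hs, hsne, rfl⟩
      · exact Or.inl h
      · exact Or.inr ⟨c :: L₁, d, L₂, s, rfl, hs, hsne, rfl⟩
    rcases suffix_append_cases (flatten_cons ▸ ht) with hL | ⟨s, rfl, hs⟩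
    · exact of_suffix_tail hL
    · rcases eq_or_ne s [] with rfl | hsne
      · exact of_suffix_tail (suffix_refl _)
      · exact Or.inr ⟨[], c, L, s, rfl, hs, hsne, rfl⟩

/-- `s` is the part of `c` from the start of `u` on. -/
lemma exists_of_infix_flatten_append {L : List (List α)} {u v : List α}
    (hu : u <:+: L.flatten ++ v) :
    u <:+: v ∨
      ∃ L₁ c L₂ s, L = L₁ ++ c :: L₂ ∧ s <:+ c ∧ s ≠ [] ∧ u <+: s ++ (L₂.flatten ++ v) := by
  obtain ⟨t, hut, ht⟩ := infix_iff_prefix_suffix.1 hu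
  rcases suffix_append_cases ht with hv | ⟨t', rfl, ht'⟩
  · exact Or.inl (hut.isInfix.trans hv.isInfix)
  · rcases exists_of_suffix_flatten ht' with rfl | ⟨L₁, c, L₂, s, rfl, hs, hsne, rfl⟩
    · exact Or.inl hut.isInfix
    · exact Or.inr ⟨L₁, c, L₂, s, rfl, hs, hsne, by simpa using hut⟩

lemma exists_of_flatten_eq_append_cons {L : List (List α)} {a b : List α} {x : α}
    (h : L.flatten = a ++ x :: b) :
    ∃ L₁ c L₂ r s, L = L₁ ++ c :: L₂ ∧ c = r ++ x :: s ∧ a = L₁.flatten ++ r := by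
  obtain ⟨L₁, c, L₂, q, rfl, hq, ⟨s, rfl⟩, hqne⟩ :=
    exists_of_prefix_flatten (L := L) (q := a ++ [x]) ⟨b, by simp [h]⟩ (by simp)
  obtain ⟨r, z, rfl⟩ := (eq_nil_or_concat' q).resolve_left hqne
  obtain ⟨rfl, hxz⟩ := append_inj' (hq.trans (append_assoc _ _ _).symm) rfl
  exact ⟨L₁, _, L₂, r, s, rfl, by simp [singleton_inj.1 hxz], rfl⟩

end List

/-- A cell `x :: t` of a decomposition: a letter `x` of the unbreakable word followed by the
tsip word `t` inserted after it. -/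
def IsCell (c : List Letter) : Prop := c ≠ [] ∧ IsTsip c.tail

section Cells

variable {cs : List (List Letter)}

lemma IsCell.eq_cons {c : List Letter} (h : IsCell c) : c = c.headI :: c.tail := by
  obtain ⟨x, t, rfl⟩ := List.exists_cons_of_ne_nil h.1
  rfl

lemma isCell_singleton (x : Letter) : IsCell [x] := ⟨List.cons_ne_nil x [], isTsip_nil⟩

lemma net1_flatten (hcs : ∀ c ∈ cs, IsCell c) : net1 cs.flatten = net1 (cs.map List.headI) := by
  induction cs with
  | nil => rfl
  | cons c cs ih =>
    have hc := hcs c List.mem_cons_self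
    rw [List.flatten_cons, hc.eq_cons]
    simp [ih fun d hd => hcs d (List.mem_cons_of_mem c hd), hc.2.net1_eq_zero]

lemma net2_flatten (hcs : ∀ c ∈ cs, IsCell c) : net2 cs.flatten = net2 (cs.map List.headI) := by
  induction cs with
  | nil => rfl
  | cons c cs ih =>
    have hc := hcs c List.mem_cons_self
    rw [List.flatten_cons, hc.eq_cons]
    simp [ih fun d hd => hcs d (List.mem_cons_of_mem c hd), hc.2.net2_eq_zero]

lemma net_flatten (hcs : ∀ c ∈ cs, IsCell c) : net cs.flatten = net (cs.map List.headI) := by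
  rw [net_eq_net1_add_net2, net_eq_net1_add_net2, net1_flatten hcs, net2_flatten hcs]

lemma NonnegPrefixes.heads (h : NonnegPrefixes cs.flatten) (hcs : ∀ c ∈ cs, IsCell c) :
    NonnegPrefixes (cs.map List.headI) := by
  intro p hp
  rw [List.prefix_iff_eq_take.1 hp, ← List.map_take]
  have htake : ∀ c ∈ cs.take p.length, IsCell c := fun c hc => hcs c (List.mem_of_mem_take hc)
  rw [← net1_flatten htake, ← net2_flatten htake]
  exact h _ (List.take_prefix _ _).flatten

lemma IsCell.isI_of_mem_head?_tail {c : List Letter} {y : Letter} (hc : IsCell c)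
    (hy : y ∈ c.tail.head?) : y.isI = true := by
  obtain ⟨t, ht⟩ : ∃ t, c.tail = y :: t := by
    cases h : c.tail with
    | nil => simp [h] at hy
    | cons z t => exact ⟨t, by simp_all⟩
  exact (ht ▸ hc.2).head_isI

end Cells

section Unbreakable

variable {cs : List (List Letter)}

/-- A tsip word that starts at the head of a cell and ends inside the cells projects onto a
tsip word of heads: the tails it passes are balanced, and the rest of the last cell it enters
is a prefix of a tsip word. -/
lemma exists_isTsip_heads_of_prefix_flatten {u : List Letter} (hcs : ∀ c ∈ cs, IsCell c)
    (hu : IsTsip u) (hne : u ≠ []) (hpre : u <+: cs.flatten) :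
    ∃ l₁ d l₂, cs = l₁ ++ d :: l₂ ∧ IsTsip (l₁.map List.headI ++ [d.headI]) := by
  obtain ⟨l₁, d, l₂, q', rfl, rfl, hq', hq'ne⟩ := List.exists_of_prefix_flatten hpre hne
  have hd : IsCell d := hcs d (by simp)
  obtain ⟨q, rfl, hq⟩ : ∃ q, q' = d.headI :: q ∧ q <+: d.tail := by
    rw [hd.eq_cons] at hq'
    simpa [hq'ne] using List.prefix_cons_iff.1 hq'
  have hseg_cells : ∀ c ∈ l₁ ++ [[d.headI]], IsCell c := by
    intro c hc
    rcases List.mem_append.1 hc with hc | hc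
    · exact hcs c (by simp [hc])
    · exact List.mem_singleton.1 hc ▸ isCell_singleton _
  have hseg_nonneg : NonnegPrefixes (l₁.map List.headI ++ [d.headI]) := by
    simpa using (hu.nonnegPrefixes.of_prefix (by simp)).heads hseg_cells
  have hseg := hseg_nonneg _ (List.prefix_refl _)
  have hq_nonneg := hd.2.nonnegPrefixes q hq
  have hu1 := hu.net1_eq_zero
  have hu2 := hu.net2_eq_zero
  have hl₁ : ∀ c ∈ l₁, IsCell c := fun c hc => hseg_cells c (by simp [hc])
  simp only [net1_append, net2_append, net1_cons, net2_cons, net1_nil, net2_nil,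
    net1_flatten hl₁, net2_flatten hl₁] at hseg hu1 hu2
  exact ⟨l₁, d, l₂, rfl, isTsip_iff.2 ⟨by simp; omega, by simp; omega, hseg_nonneg⟩⟩

/-- A non-empty tsip word cannot start at the head of a cell other than the first one: it
would project onto a tsip infix of the unbreakable word of heads, or onto a proper suffix of it
of non-negative net size. -/
lemma eq_nil_of_isTsip_prefix_flatten_append {L₁ C : List (List Letter)} {u v : List Letter}
    (hcs : ∀ c ∈ L₁ ++ C, IsCell c) (hxs : IsUnbreakable ((L₁ ++ C).map List.headI))
    (hC : C ≠ []) (hu : IsTsip u) (hne : u ≠ []) (hpre : u <+: C.flatten ++ v) : L₁ = [] := by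
  have hC_cells : ∀ c ∈ C, IsCell c := fun c hc => hcs c (List.mem_append_right L₁ hc)
  rcases List.prefix_append_cases hpre with hpre | ⟨u₂, rfl, -⟩
  · obtain ⟨l₁, d, l₂, rfl, hseg⟩ := exists_isTsip_heads_of_prefix_flatten hC_cells hu hne hpre
    have hsplit : (L₁ ++ (l₁ ++ d :: l₂)).map List.headI =
        L₁.map List.headI ++ (l₁.map List.headI ++ [d.headI]) ++ l₂.map List.headI := by
      simp
    rw [hsplit] at hxs
    simpa using (hxs.eq_nil_of_isTsip hseg (by simp)).1
  · by_contra hL₁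
    rw [List.map_append] at hxs
    have hpos := hxs.net_pos (by simpa using hL₁) (by simpa using hC)
    have hheads := (hu.nonnegPrefixes.of_prefix (List.prefix_append _ _)).heads hC_cells _
      (List.prefix_refl _)
    have h0 := hxs.1.net_eq_zero
    rw [net_append, net_eq_net1_add_net2 (C.map _)] at h0
    omega

lemma isTsip_infix_flatten_append_cases {u v : List Letter} (hcs : ∀ c ∈ cs, IsCell c)
    (hlast : ∀ l c, cs = l ++ [c] → c.tail = []) (hxs : IsUnbreakable (cs.map List.headI))
    (hu : IsTsip u) (hne : u ≠ []) (hinf : u <:+: cs.flatten ++ v) :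
    (∃ c ∈ cs, u <:+: c.tail) ∨ u <:+: v ∨ u <+: cs.flatten ++ v := by
  rcases List.exists_of_infix_flatten_append hinf with hv | ⟨L₁, c, L₂, s, rfl, hs, hsne, hus⟩
  · exact Or.inr (Or.inl hv)
  have hc : IsCell c := hcs c (by simp)
  rw [hc.eq_cons] at hs
  rcases List.suffix_cons_iff.1 hs with rfl | hst
  · have hL₁ : L₁ = [] :=
      eq_nil_of_isTsip_prefix_flatten_append (C := c :: L₂) hcs hxs (by simp) hu hne
        (by simpa [← hc.eq_cons] using hus)
    subst hL₁
    exact Or.inr (Or.inr (by simpa [← hc.eq_cons] using hus))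
  rcases List.prefix_append_cases hus with hus | ⟨r, rfl, hr⟩
  · exact Or.inl ⟨c, by simp, hus.isInfix.trans hst.isInfix⟩
  -- `s` is balanced: a prefix of the tsip word `u` and a suffix of the tsip word `c.tail`
  have hs1 := hu.nonnegPrefixes s (List.prefix_append s r)
  have hs2 := hc.2.nonpos_of_suffix hst
  have hr_tsip : IsTsip r := hu.of_append_left (by omega) (by omega)
  rcases eq_or_ne r [] with rfl | hrne
  · exact Or.inl ⟨c, by simp, by simpa using hst.isInfix⟩
  rcases eq_or_ne L₂ [] with rfl | hL₂
  · rw [hlast L₁ c rfl] at hst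
    exact absurd (List.suffix_nil.1 hst) hsne
  · have := eq_nil_of_isTsip_prefix_flatten_append (L₁ := L₁ ++ [c]) (C := L₂)
      (by simpa using hcs) (by simpa using hxs) hL₂ hr_tsip hrne hr
    simp at this

end Unbreakable

section Eager

variable {cs : List (List Letter)}

lemma not_badPair_cell_junction_iff {c d : List Letter} (hc : IsCell c) (hd : IsCell d) :
    (∀ a ∈ c.getLast?, ∀ b ∈ d.head?, ¬ BadPair a b) ↔
      (c.tail = [] → ¬ BadPair c.headI d.headI) := by
  rw [hd.eq_cons, hc.eq_cons]
  rcases List.eq_nil_or_concat' c.tail with ht | ⟨t, z, ht⟩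
  · simp [ht]
  · have hz := (ht ▸ hc.2).getLast_isI
    have hzbad : ∀ b, ¬ BadPair z b := fun b hb => absurd hb.isI.1 (by simp [hz])
    rw [ht, ← List.cons_append, List.getLast?_concat]
    simp [hzbad]

lemma isChain_flatten_iff_of_isCell (hcs : ∀ c ∈ cs, IsCell c) :
    cs.flatten.IsChain (fun a b => ¬ BadPair a b) ↔
      (∀ c ∈ cs, OutputsEagerly c.tail) ∧
        cs.IsChain fun c d => c.tail = [] → ¬ BadPair c.headI d.headI := by
  rw [List.isChain_flatten fun h => (hcs [] h).1 rfl]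
  refine and_congr (forall₂_congr fun c hc => ?_)
    (List.IsChain.iff_of_mem_imp fun c d hc hd =>
      not_badPair_cell_junction_iff (hcs c hc) (hcs d hd))
  rw [(hcs c hc).eq_cons, List.isChain_cons, outputsEagerly_iff_isChain, List.tail_cons,
    and_iff_right_iff_imp]
  intro _ y hy hbad
  have := (hcs c hc).isI_of_mem_head?_tail hy
  simp [hbad.isI] at this

lemma outputsEagerly_flatten_append_iff {v : List Letter} (hcs : ∀ c ∈ cs, IsCell c)
    (hlast : ∀ l c, cs = l ++ [c] → c.tail = []) (hxs : IsOpSeq (cs.map List.headI)) :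
    OutputsEagerly (cs.flatten ++ v) ↔
      ((∀ c ∈ cs, OutputsEagerly c.tail) ∧
        cs.IsChain fun c d => c.tail = [] → ¬ BadPair c.headI d.headI) ∧ OutputsEagerly v := by
  have hjunction : ∀ a ∈ cs.flatten.getLast?, ∀ b ∈ v.head?, ¬ BadPair a b := by
    intro a ha b _ hab
    rcases List.eq_nil_or_concat' cs with rfl | ⟨l, c, rfl⟩
    · simp at ha
    have hc := hcs c (by simp)
    rw [List.map_append, List.map_singleton] at hxs
    rw [List.flatten_append, List.flatten_singleton, hc.eq_cons, hlast l c rfl,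
      List.getLast?_concat, Option.mem_some_iff] at ha
    have := hxs.getLast_isI
    simp [ha, hab.isI] at this
  rw [outputsEagerly_iff_isChain, outputsEagerly_iff_isChain, List.isChain_append,
    isChain_flatten_iff_of_isCell hcs]
  tauto

end Eager

section Canonical

variable {cs : List (List Letter)} {v : List Letter}

/-- An `I₂` right after a balanced prefix would start a tsip sub-word not beginning with `I₁`. -/
lemma one_le_net_of_standard {t r s : List Letter} {x : Letter} (ht : IsTsip t)
    (hstd : Standard t) (heq : t = r ++ x :: s) (hx : x = I2 ∨ x = O2) : 1 ≤ net r := by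
  subst heq
  have hr := ht.nonnegPrefixes r (List.prefix_append _ _)
  rw [net_eq_net1_add_net2]
  rcases hx with rfl | rfl
  · by_contra hlt
    have hs := ht.of_append_left (p := r) (by omega) (by omega)
    have := hstd _ (List.suffix_append r _).isInfix hs (List.cons_ne_nil _ _)
    simp at this
  · have := ht.nonnegPrefixes (r ++ [O2]) ⟨s, by simp⟩
    simp [Letter.delta1, Letter.delta2] at this
    omega

lemma TopHappy.append {p : List Letter} (hp : TopHappy p) (h0 : net p = 0) (hv : TopHappy v) :
    TopHappy (p ++ v) := by
  refine topHappy_iff.2 fun a b x h hx => ?_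
  rcases List.append_eq_append_iff.1 h with ⟨e, rfl, he⟩ | ⟨e, rfl, he⟩
  · simpa [h0] using topHappy_iff.1 hv e b x he hx
  · rcases e with _ | ⟨y, e⟩
    · simpa using topHappy_iff.1 hv [] b x he.symm hx
    · obtain ⟨rfl, -⟩ := List.cons_eq_cons.1 he
      exact topHappy_iff.1 hp a e x rfl hx

lemma topHappy_heads_of_flatten_append (hcs : ∀ c ∈ cs, IsCell c)
    (h : TopHappy (cs.flatten ++ v)) : TopHappy (cs.map List.headI) := by
  refine topHappy_iff.2 fun a b x hab hx => ?_
  obtain ⟨l₁, l₂, rfl, rfl, hl₂⟩ := List.map_eq_append_iff.1 hab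
  obtain ⟨c, l₂, rfl, rfl, -⟩ := List.map_eq_cons_iff.1 hl₂
  have hl₁ : ∀ d ∈ l₁, IsCell d := fun d hd => hcs d (by simp [hd])
  have hc : IsCell c := hcs c (by simp)
  rw [← net_flatten hl₁]
  refine topHappy_iff.1 h l₁.flatten (c.tail ++ l₂.flatten ++ v) c.headI ?_ hx
  conv_lhs => rw [List.flatten_append, List.flatten_cons, hc.eq_cons]
  simp

lemma topHappy_flatten (hcs : ∀ c ∈ cs, IsCell c) (hlast : ∀ l c, cs = l ++ [c] → c.tail = [])
    (hxs : IsUnbreakable (cs.map List.headI)) (hth : TopHappy (cs.map List.headI))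
    (hstd : ∀ c ∈ cs, Standard c.tail) : TopHappy cs.flatten := by
  refine topHappy_iff.2 fun a b x h hx => ?_
  obtain ⟨L₁, c, L₂, r, s, rfl, hcrs, rfl⟩ := List.exists_of_flatten_eq_append_cons h
  have hL₁ : ∀ d ∈ L₁, IsCell d := fun d hd => hcs d (by simp [hd])
  have hc : IsCell c := hcs c (by simp)
  rw [hc.eq_cons] at hcrs
  rcases r with _ | ⟨y, r⟩
  · obtain ⟨rfl, -⟩ := List.cons_eq_cons.1 hcrs
    have := topHappy_iff.1 hth (L₁.map List.headI) (L₂.map List.headI) c.headI (by simp) hx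
    simpa [net_flatten hL₁] using this
  · obtain ⟨rfl, htail⟩ := List.cons_eq_cons.1 hcrs
    have hL₂ : L₂ ≠ [] := by
      rintro rfl
      simp [hlast L₁ c rfl] at htail
    have hpos := IsUnbreakable.net_pos (p := L₁.map List.headI ++ [c.headI])
      (q := L₂.map List.headI) (by simpa using hxs) (by simp) (by simpa using hL₂)
    have hr := one_le_net_of_standard hc.2 (hstd c (by simp)) htail hx
    simp only [net_append, ← net_flatten hL₁, net_cons, net_nil, add_zero] at hpos ⊢
    omega

lemma standard_flatten_append (hcs : ∀ c ∈ cs, IsCell c)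
    (hlast : ∀ l c, cs = l ++ [c] → c.tail = []) (hxs : IsUnbreakable (cs.map List.headI))
    (hth : TopHappy (cs.map List.headI)) (hstd : ∀ c ∈ cs, Standard c.tail) (hv : Standard v) :
    Standard (cs.flatten ++ v) := by
  intro u hinf hu hne
  rcases isTsip_infix_flatten_append_cases hcs hlast hxs hu hne hinf with
    ⟨c, hc, huc⟩ | huv | ⟨t, ht⟩
  · exact hstd c hc u huc hu hne
  · exact hv u huv hu hne
  · obtain ⟨c, cs, rfl⟩ := List.exists_cons_of_ne_nil (l := cs) fun h => hxs.2.1 (by simp [h])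
    obtain ⟨y, u, rfl⟩ := List.exists_cons_of_ne_nil hne
    have hc : IsCell c := hcs c (by simp)
    have hxs_cons : IsOpSeq (c.headI :: cs.map List.headI) := hxs.1
    rw [List.flatten_cons, hc.eq_cons] at ht
    obtain ⟨rfl, -⟩ := List.cons_eq_cons.1 ht
    simpa using head_eq_I1_of_topHappy hxs_cons hth

theorem canonical_flatten_append_iff (hcs : ∀ c ∈ cs, IsCell c)
    (hlast : ∀ l c, cs = l ++ [c] → c.tail = []) (hxs : IsUnbreakable (cs.map List.headI)) :
    Canonical (cs.flatten ++ v) ↔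
      TopHappy (cs.map List.headI) ∧ (∀ c ∈ cs, Standard c.tail ∧ OutputsEagerly c.tail) ∧
        Canonical v ∧ cs.IsChain fun c d => c.tail = [] → ¬ BadPair c.headI d.headI := by
  have hnet : net cs.flatten = 0 := (net_flatten hcs).trans hxs.1.net_eq_zero
  have htail_infix : ∀ c ∈ cs, c.tail <:+: cs.flatten ++ v := fun c hc =>
    ((List.tail_suffix c).isInfix.trans (List.infix_of_mem_flatten hc)).trans
      (List.prefix_append _ _).isInfix
  have hv_infix : v <:+: cs.flatten ++ v := (List.suffix_append _ _).isInfix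
  rw [Canonical, Canonical, outputsEagerly_flatten_append_iff hcs hlast hxs.1]
  constructor
  · rintro ⟨⟨⟨heag, hchain⟩, hveag⟩, hstd, hth⟩
    exact ⟨topHappy_heads_of_flatten_append hcs hth,
      fun c hc => ⟨hstd.infix (htail_infix c hc), heag c hc⟩,
      ⟨hveag, hstd.infix hv_infix, hth.of_append_left hnet⟩, hchain⟩
  · rintro ⟨hth, htails, ⟨hveag, hvstd, hvth⟩, hchain⟩
    exact ⟨⟨⟨fun c hc => (htails c hc).2, hchain⟩, hveag⟩,
      standard_flatten_append hcs hlast hxs hth (fun c hc => (htails c hc).1) hvstd,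
      (topHappy_flatten hcs hlast hxs hth fun c hc => (htails c hc).1).append hnet hvth⟩

end Canonical

/-- The cells `xᵢ :: wᵢ` of the decomposition `x₁w₁⋯x_{2m}`, the last one being `[x_{2m}]`. -/
def cellsOf (xs : List Letter) (ws : List (List Letter)) : List (List Letter) :=
  List.zipWith (fun x wi => x :: wi) xs (ws ++ [[]])

section CellsOf

variable {xs : List Letter} {ws : List (List Letter)}

lemma length_cellsOf (hlen : xs.length = ws.length + 1) : (cellsOf xs ws).length = xs.length := by
  simp [cellsOf, hlen]

lemma map_headI_cellsOf (hlen : xs.length = ws.length + 1) :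
    (cellsOf xs ws).map List.headI = xs :=
  List.ext_getElem (by simp [length_cellsOf hlen]) fun i _ _ => by simp [cellsOf]

lemma map_tail_cellsOf (hlen : xs.length = ws.length + 1) :
    (cellsOf xs ws).map List.tail = ws ++ [[]] :=
  List.ext_getElem (by simp [length_cellsOf hlen, hlen]) fun i _ _ => by simp [cellsOf]

lemma forall_mem_cellsOf_tail_iff (hlen : xs.length = ws.length + 1) {P : List Letter → Prop}
    (hP : P []) : (∀ c ∈ cellsOf xs ws, P c.tail) ↔ ∀ wi ∈ ws, P wi := by
  rw [← List.forall_mem_map (P := P), map_tail_cellsOf hlen]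
  simp [or_imp, forall_and, hP]

lemma isCell_of_mem_cellsOf (hlen : xs.length = ws.length + 1) (hws : ∀ wi ∈ ws, IsTsip wi) :
    ∀ c ∈ cellsOf xs ws, IsCell c := by
  intro c hc
  obtain ⟨i, hi, rfl⟩ := List.getElem_of_mem hc
  refine ⟨by simp [cellsOf], ?_⟩
  exact (forall_mem_cellsOf_tail_iff hlen isTsip_nil).2 hws _ (List.getElem_mem hi)

lemma tail_eq_nil_of_cellsOf_eq_append (hlen : xs.length = ws.length + 1)
    {l : List (List Letter)} {c : List Letter} (h : cellsOf xs ws = l ++ [c]) : c.tail = [] := by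
  have := congrArg (List.map List.tail) h
  rw [map_tail_cellsOf hlen, List.map_append, List.map_singleton] at this
  exact (List.singleton_inj.1 (List.append_inj' this rfl).2).symm

lemma isChain_cellsOf_iff (hlen : xs.length = ws.length + 1) :
    (cellsOf xs ws).IsChain (fun c d => c.tail = [] → ¬ BadPair c.headI d.headI) ↔
      ∀ i a b, xs[i]? = some a → xs[i + 1]? = some b → BadPair a b →
        ∀ wi, ws[i]? = some wi → wi ≠ [] := by
  rw [List.isChain_iff_getElem]
  constructor
  · intro h i a b ha hb hab wi hwi hnil
    obtain ⟨hi, rfl⟩ := List.getElem?_eq_some_iff.1 hb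
    obtain ⟨_, rfl⟩ := List.getElem?_eq_some_iff.1 ha
    obtain ⟨hiw, rfl⟩ := List.getElem?_eq_some_iff.1 hwi
    refine h i (by rwa [length_cellsOf hlen]) ?_ (by simpa [cellsOf] using hab)
    simp [cellsOf, List.getElem_append_left hiw, hnil]
  · intro h i hi htail hab
    rw [length_cellsOf hlen] at hi
    have hiw : i < ws.length := by omega
    simp only [cellsOf, List.getElem_zipWith, List.getElem_append_left hiw, List.tail_cons,
      List.headI_cons] at htail hab
    exact h i _ _ (List.getElem?_eq_getElem _) (List.getElem?_eq_getElem hi) hab _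
      (List.getElem?_eq_getElem hiw) htail

end CellsOf

theorem stmt_10_general (w : List Letter) (xs : List Letter) (ws : List (List Letter))
    (v : List Letter) (hd : IsDecomp w xs ws v) :
    Canonical w ↔
      TopHappy xs ∧
        (∀ wi ∈ ws, Standard wi ∧ OutputsEagerly wi) ∧
        Canonical v ∧
        ∀ i : ℕ, ∀ a b : Letter, xs[i]? = some a → xs[i + 1]? = some b →
          ((a = Letter.I1 ∧ b = Letter.O2) ∨ (a = Letter.I2 ∧ b = Letter.O1)) →
          ∀ wi : List Letter, ws[i]? = some wi → wi ≠ [] := by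
  obtain ⟨-, hlen, hxs, hws, -, rfl⟩ := hd
  rw [← map_headI_cellsOf hlen] at hxs
  refine (canonical_flatten_append_iff (isCell_of_mem_cellsOf hlen hws)
    (fun _ _ => tail_eq_nil_of_cellsOf_eq_append hlen) hxs).trans ?_
  rw [map_headI_cellsOf hlen, isChain_cellsOf_iff hlen,
    forall_mem_cellsOf_tail_iff hlen (P := fun t => Standard t ∧ OutputsEagerly t)
      ⟨standard_nil, outputsEagerly_nil⟩]
  rfl

/-- A non-empty operation sequence `w` with decomposition
`w = x₁w₁⋯w_{2m-1}x_{2m}v` is canonical if and only if: (i) `x₁x₂⋯x_{2m}` is top happy;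
(ii) each `wᵢ` is a standard tsip word that outputs eagerly; (iii) `v` is canonical;
(iv) whenever `xᵢxᵢ₊₁` equals `I₁O₂` or `I₂O₁`, the word `wᵢ` is non-empty. -/
theorem stmt_10 (w : List Letter) (xs : List Letter) (ws : List (List Letter))
    (v : List Letter) (hne : w ≠ []) (hd : IsDecomp w xs ws v) :
    Canonical w ↔
      TopHappy xs ∧
        (∀ wi ∈ ws, Standard wi ∧ OutputsEagerly wi) ∧
        Canonical v ∧
        ∀ i : ℕ, ∀ a b : Letter, xs[i]? = some a → xs[i + 1]? = some b →
          ((a = Letter.I1 ∧ b = Letter.O2) ∨ (a = Letter.I2 ∧ b = Letter.O1)) →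
          ∀ wi : List Letter, ws[i]? = some wi → wi ≠ [] :=
  stmt_10_general w xs ws v hd
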